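/- Let a, b be real numbers and n a nonnegative integer such that 2i+(−1)^{n+1}+2−2a ≠ 0 for all 0 ≤ i ≤ ⌊n/2⌋−1 and (a+b−n+1/2)_k ≠ 0 for all 0 ≤ k ≤ ⌊n/2⌋. Then S_n(1, 1, −2a−2b+2, −2a; x) = K_n · A_n^{(a,b)}(x) for all real x, where K_n = ∏_{i=0}^{⌊n/2⌋−1} (2i+2⌊n/2⌋+(−1)^{n+1}+2−2a−2b) / (2i+(−1)^{n+1}+2−2a) is the leading coefficient of S_n(1, 1, −2a−2b+2, −2a; x). Equivalently, the monic normalization of S_n(1, 1, −2a−2b+2, −2a; x) has the hypergeometric form x^n · ₂F₁(−⌊n/2⌋, a+1/2−⌊(n+1)/2⌋; a+b−n+1/2; −1/x²) = A_n^{(a,b)}(x). -/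

import Mathlib

open Real Finset

noncomputable section

/-- Pochhammer symbol `(r)_k = r (r+1) ⋯ (r+k-1)`. -/
def poch (r : ℝ) (k : ℕ) : ℝ := ∏ i ∈ Finset.range k, (r + i)

/-- The basic class of symmetric polynomials `S_n(p,q,r,s; x)`. -/
def S (p q r s : ℝ) (n : ℕ) (x : ℝ) : ℝ :=
  ∑ k ∈ Finset.range (n / 2 + 1),
    ((n / 2).choose k : ℝ) *
      (∏ i ∈ Finset.range (n / 2 - k),
        ((2 * (i : ℝ) + (-1) ^ (n + 1) + 2 * ((n / 2 : ℕ) : ℝ)) * p + r) /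
          ((2 * (i : ℝ) + (-1) ^ (n + 1) + 2) * q + s)) *
      x ^ (n - 2 * k)

/-- The monic polynomial `A_n^{(a,b)}(x)`. -/
def A (a b : ℝ) (n : ℕ) (x : ℝ) : ℝ :=
  ∑ k ∈ Finset.range (n / 2 + 1),
    poch (-(n / 2 : ℕ) : ℝ) k * poch (a + 1/2 - ((n + 1) / 2 : ℕ)) k * (-1) ^ k /
      (poch (a + b - n + 1/2) k * (Nat.factorial k)) * x ^ (n - 2 * k)

/-!
Compare the coefficients of `x ^ (n - 2k)`, writing `m = ⌊n/2⌋`. The leading-coefficient product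
over `i < m` is the product over `i < m - k` occurring in `S` times its last `k` factors. Read
backwards, those factors are arithmetic progressions of step `-2`, so they contribute
`(a+b-n+1/2)_k / (a+1/2-⌈n/2⌉)_k`; this cancels against `A`, because
`(-m)_k (-1)^k = k! * choose m k`.
-/

theorem neg_one_pow_succ_eq_two_mul_sub (n : ℕ) :
    (-1 : ℝ) ^ (n + 1) = 2 * (((n + 1) / 2 : ℕ) : ℝ) - 2 * ((n / 2 : ℕ) : ℝ) - 1 := by
  obtain ⟨r, rfl | rfl⟩ := Nat.even_or_odd' n
  · rw [show (2 * r + 1) / 2 = r by omega, show 2 * r / 2 = r by omega,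
      (Odd.neg_one_pow ⟨r, rfl⟩ : (-1 : ℝ) ^ (2 * r + 1) = -1)]
    ring
  · rw [show (2 * r + 1 + 1) / 2 = r + 1 by omega, show (2 * r + 1) / 2 = r by omega,
      (Even.neg_one_pow ⟨r + 1, by ring⟩ : (-1 : ℝ) ^ (2 * r + 1 + 1) = 1)]
    push_cast
    ring

theorem natCast_eq_div_two_add_succ_div_two (n : ℕ) :
    (n : ℝ) = ((n / 2 : ℕ) : ℝ) + (((n + 1) / 2 : ℕ) : ℝ) := by
  exact_mod_cast (by omega : n = n / 2 + (n + 1) / 2)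

theorem poch_neg_mul_neg_one_pow (r : ℝ) (k : ℕ) :
    poch (-r) k * (-1) ^ k = (descPochhammer ℝ k).eval r := by
  rw [descPochhammer_eval_eq_prod_range, poch, pow_eq_prod_const, ← prod_mul_distrib]
  exact prod_congr rfl fun j _ => by ring

theorem poch_neg_natCast_mul_neg_one_pow (m k : ℕ) :
    poch (-(m : ℝ)) k * (-1) ^ k = k.factorial * m.choose k := by
  rw [poch_neg_mul_neg_one_pow, descPochhammer_eval_eq_descFactorial,
    Nat.descFactorial_eq_factorial_mul_choose, Nat.cast_mul]

theorem prod_range_eq_prod_range_sub_mul {M : Type*} [CommMonoid M] (f : ℕ → M) {k m : ℕ}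
    (hk : k ≤ m) :
    ∏ i ∈ range m, f i = (∏ i ∈ range (m - k), f i) * ∏ j ∈ range k, f (m - k + j) := by
  rw [← prod_range_add, Nat.sub_add_cancel hk]

theorem prod_range_two_mul_sub_add_eq_poch (u : ℝ) {k m : ℕ} (hk : k ≤ m) :
    ∏ j ∈ range k, (2 * ((m - k + j : ℕ) : ℝ) + u) = (-2) ^ k * poch (1 - m - u / 2) k := by
  rw [poch, ← prod_range_reflect, pow_eq_prod_const, ← prod_mul_distrib]
  refine prod_congr rfl fun j hj => ?_
  have hjk := mem_range.mp hj
  rw [Nat.cast_add, Nat.cast_sub hk, Nat.cast_sub (by omega), Nat.cast_sub (by omega)]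
  push_cast
  ring

theorem prod_range_two_mul_add_div_eq (u v : ℝ) {k m : ℕ} (hk : k ≤ m) :
    ∏ i ∈ range m, (2 * (i : ℝ) + u) / (2 * i + v) =
      (∏ i ∈ range (m - k), (2 * (i : ℝ) + u) / (2 * i + v)) *
        (poch (1 - m - u / 2) k / poch (1 - m - v / 2) k) := by
  rw [prod_range_eq_prod_range_sub_mul _ hk, prod_div_distrib (s := range k),
    prod_range_two_mul_sub_add_eq_poch u hk, prod_range_two_mul_sub_add_eq_poch v hk,
    mul_div_mul_left _ _ (pow_ne_zero k (by norm_num))]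

theorem poch_ne_zero_of_two_mul_add_ne_zero (v : ℝ) {k m : ℕ} (hk : k ≤ m)
    (hv : ∀ i < m, 2 * (i : ℝ) + v ≠ 0) : poch (1 - m - v / 2) k ≠ 0 := by
  refine right_ne_zero_of_mul (a := (-2 : ℝ) ^ k) ?_
  rw [← prod_range_two_mul_sub_add_eq_poch v hk]
  exact prod_ne_zero_iff.mpr fun j hj => hv _ (by have := mem_range.mp hj; omega)

theorem S_eq_leadingCoeff_mul_A (a b : ℝ) (n : ℕ)
    (h1 : ∀ i : ℕ, i < n / 2 → 2 * (i : ℝ) + (-1) ^ (n + 1) + 2 - 2 * a ≠ 0)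
    (h2 : ∀ k ≤ n / 2, poch (a + b - n + 1/2) k ≠ 0) (x : ℝ) :
    S 1 1 (-2 * a - 2 * b + 2) (-2 * a) n x =
      (∏ i ∈ Finset.range (n / 2),
        (2 * (i : ℝ) + 2 * ((n / 2 : ℕ) : ℝ) + (-1) ^ (n + 1) + 2 - 2 * a - 2 * b) /
          (2 * (i : ℝ) + (-1) ^ (n + 1) + 2 - 2 * a)) * A a b n x := by
  unfold S A
  have hε := neg_one_pow_succ_eq_two_mul_sub n
  have hn := natCast_eq_div_two_add_succ_div_two n
  set m := n / 2
  set u : ℝ := 2 * m + (-1) ^ (n + 1) + 2 - 2 * a - 2 * b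
  set v : ℝ := (-1) ^ (n + 1) + 2 - 2 * a
  have hd : a + b - n + 1/2 = 1 - m - u / 2 := by simp only [u, hε, hn]; ring
  have hc : a + 1/2 - ((n + 1) / 2 : ℕ) = 1 - m - v / 2 := by simp only [v, hε]; ring
  have hv : ∀ i < m, 2 * (i : ℝ) + v ≠ 0 := fun i hi => by
    simpa only [v, add_assoc, add_sub_assoc] using h1 i hi
  have hK : ∏ i ∈ range m, (2 * (i : ℝ) + 2 * m + (-1) ^ (n + 1) + 2 - 2 * a - 2 * b) /
      (2 * i + (-1) ^ (n + 1) + 2 - 2 * a) = ∏ i ∈ range m, (2 * (i : ℝ) + u) / (2 * i + v) :=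
    prod_congr rfl fun i _ => by ring
  rw [hK, hc, hd, mul_sum]
  refine sum_congr rfl fun k hk => ?_
  have hkm : k ≤ m := by have := mem_range.mp hk; omega
  have hS : ∏ i ∈ range (m - k),
      ((2 * (i : ℝ) + (-1) ^ (n + 1) + 2 * m) * 1 + (-2 * a - 2 * b + 2)) /
        ((2 * i + (-1) ^ (n + 1) + 2) * 1 + -2 * a) =
      ∏ i ∈ range (m - k), (2 * (i : ℝ) + u) / (2 * i + v) :=
    prod_congr rfl fun i _ => by ring
  have hcne := poch_ne_zero_of_two_mul_add_ne_zero v hkm hv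
  have hdne := hd ▸ h2 k hkm
  rw [hS, prod_range_two_mul_add_div_eq u v hkm, mul_right_comm _ _ ((-1) ^ k),
    poch_neg_natCast_mul_neg_one_pow]
  generalize poch (1 - m - u / 2) k = D at hdne ⊢
  generalize poch (1 - m - v / 2) k = C at hcne ⊢
  field_simp
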